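/- Let z ∈ [−1, −8/13) and let σ be the 4⊗4 Werner state ρ_w = ((4 − z) I + (4z − 1) F)/60 reindexed as a 2⊗8 density matrix via a bijection Fin 4 ≃ Fin 2 × Fin 2 on the first tensor factor. Then σ violates the conjectured inequality D ≥ N²: its geometric discord is strictly smaller than its squared negativity, D(σ) < N(σ)². -/

import Mathlib

open Matrix
open scoped Kronecker

noncomputable section

/-- The flip (swap) operator on `ℂ⁴ ⊗ ℂ⁴`. -/
def flipOp : Matrix (Fin 4 × Fin 4) (Fin 4 × Fin 4) ℂ :=
  fun p q => if p.1 = q.2 ∧ p.2 = q.1 then 1 else 0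

/-- The `4 ⊗ 4` Werner state with parameter `z`. -/
def werner4 (z : ℝ) : Matrix (Fin 4 × Fin 4) (Fin 4 × Fin 4) ℂ :=
  ((((4 : ℂ) - (z : ℂ)) / 60) • 1) + ((((4 : ℂ) * (z : ℂ) - 1) / 60) • flipOp)

/-- The inverse of the bijection `Fin 4 ≃ Fin 2 × Fin 2`, `i ↦ (i / 2, i % 2)`. -/
def pair (a b : Fin 2) : Fin 4 := ⟨2 * a.val + b.val, by omega⟩

/-- The `4 ⊗ 4` Werner state seen as a `2 ⊗ 8` state, reindexing the first tensor
factor via `Fin 4 ≃ Fin 2 × Fin 2`, `i ↦ (i / 2, i % 2)`. -/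
def wernerAs2x8 (z : ℝ) :
    Matrix (Fin 2 × (Fin 2 × Fin 4)) (Fin 2 × (Fin 2 × Fin 4)) ℂ :=
  fun p q => werner4 z (pair p.1 p.2.1, p.2.2) (pair q.1 q.2.1, q.2.2)

/-- The squared Frobenius (Hilbert-Schmidt) norm `‖X‖_F² = trace (Xᴴ X)`. -/
def frobSq {m : Type*} [Fintype m] (X : Matrix m m ℂ) : ℝ :=
  (Xᴴ * X).trace.re

/-- The post-measurement state after a von Neumann measurement `{P, I - P}` on the
qubit subsystem `A`. -/
def measured {B : Type*} [Fintype B] [DecidableEq B] (P : Matrix (Fin 2) (Fin 2) ℂ)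
    (ρ : Matrix (Fin 2 × B) (Fin 2 × B) ℂ) :
    Matrix (Fin 2 × B) (Fin 2 × B) ℂ :=
  (P ⊗ₖ (1 : Matrix B B ℂ)) * ρ * (P ⊗ₖ (1 : Matrix B B ℂ)) +
    ((1 - P) ⊗ₖ (1 : Matrix B B ℂ)) * ρ * ((1 - P) ⊗ₖ (1 : Matrix B B ℂ))

/-- The (normalized) geometric discord of a `2 ⊗ n` state. -/
def geomDiscord {B : Type*} [Fintype B] [DecidableEq B]
    (ρ : Matrix (Fin 2 × B) (Fin 2 × B) ℂ) : ℝ :=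
  2 * sInf {r : ℝ | ∃ P : Matrix (Fin 2) (Fin 2) ℂ,
    P * P = P ∧ Pᴴ = P ∧ P.trace = 1 ∧ r = frobSq (ρ - measured P ρ)}

/-- Partial transpose with respect to the first (qubit) factor. -/
def ptA {B : Type*} (ρ : Matrix (Fin 2 × B) (Fin 2 × B) ℂ) :
    Matrix (Fin 2 × B) (Fin 2 × B) ℂ :=
  fun p q => ρ (q.1, p.2) (p.1, q.2)

/-! The partial transpose of the Werner state is `a • 1 + b • G` with `a = (4 - z)/60`,
`b = (4z - 1)/60`, where `G`, the partial transpose of the flip, satisfies `G³ = 4 G`,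
`tr G = 4` and `tr G² = 16`. Hence its spectrum is `{a, a + 2b, a - 2b}`, and since `|λ|` agrees
with a quadratic polynomial on these three points, `∑ |λᵢ|` is a combination of `tr 1`, `tr G`
and `tr G²`: the negativity is `-(2 + 7z)/10`. On the other side, measuring the first qubit in
the computational basis only removes the off-diagonal blocks of the state, which carry 8 entries
of modulus `|b|`; so `D ≤ 16 b²`, and `16 b² < (2 + 7z)²/100` is equivalent to `z < -8/13`. -/

open Polynomial

section Hermitian

variable {n 𝕜 : Type*} [RCLike 𝕜] [Fintype n] [DecidableEq n] {A : Matrix n n 𝕜}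

theorem Matrix.IsHermitian.trace_cfc (hA : A.IsHermitian) (f : ℝ → ℝ) :
    (cfc f A).trace = ∑ i, (f (hA.eigenvalues i) : 𝕜) := by
  rw [hA.cfc_eq, IsHermitian.cfc, Unitary.conjStarAlgAut_apply, trace_mul_cycle,
    Unitary.coe_star_mul_self, Matrix.one_mul, trace_diagonal]
  rfl

theorem Matrix.IsHermitian.trace_aeval (hA : A.IsHermitian) (p : ℝ[X]) :
    (aeval A p).trace = ∑ i, ((p.eval (hA.eigenvalues i) : ℝ) : 𝕜) := by
  rw [← cfc_polynomial p A hA.isSelfAdjoint, hA.trace_cfc]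

theorem Matrix.IsHermitian.eval_eigenvalues_eq_zero (hA : A.IsHermitian) {p : ℝ[X]}
    (hp : aeval A p = 0) (i : n) : p.eval (hA.eigenvalues i) = 0 := by
  have hmem : p.eval (hA.eigenvalues i) ∈ spectrum ℝ (aeval A p) := by
    rw [← cfc_polynomial p A hA.isSelfAdjoint,
      cfc_map_spectrum (fun x => p.eval x) A hA.isSelfAdjoint]
    exact ⟨_, hA.eigenvalues_mem_spectrum_real i, rfl⟩
  have : Nonempty n := ⟨i⟩
  simpa [hp, spectrum.zero_eq] using hmem

theorem Matrix.IsHermitian.eigenvalues_eq_or_of_cube (hA : A.IsHermitian) {a d : ℝ}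
    (h : (A - algebraMap ℝ _ a) ^ 3 = d ^ 2 • (A - algebraMap ℝ _ a)) (i : n) :
    hA.eigenvalues i = a ∨ hA.eigenvalues i = a + d ∨ hA.eigenvalues i = a - d := by
  have hcube := hA.eval_eigenvalues_eq_zero
    (p := (X - C a) ^ 3 - C (d ^ 2) * (X - C a)) (by simp [h, Algebra.smul_def]) i
  simp only [eval_sub, eval_mul, eval_pow, eval_X, eval_C] at hcube
  have hroot : (hA.eigenvalues i - a) * (hA.eigenvalues i - (a + d)) *
      (hA.eigenvalues i - (a - d)) = 0 := by
    linear_combination hcube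
  simp only [mul_eq_zero, sub_eq_zero] at hroot
  tauto

end Hermitian

theorem Finset.sum_abs_eq_of_forall_mem {ι : Type*} (s : Finset ι) (f : ι → ℝ) {a d : ℝ}
    (hd : d ≠ 0) (ha : 0 ≤ a) (had : a - d ≤ 0)
    (hf : ∀ i ∈ s, f i = a ∨ f i = a + d ∨ f i = a - d) :
    ∑ i ∈ s, |f i| =
      ∑ i ∈ s, f i - (a - d) / d ^ 2 * ∑ i ∈ s, (f i - a) * (f i - (a + d)) := by
  rw [Finset.mul_sum, ← Finset.sum_sub_distrib]
  refine Finset.sum_congr rfl fun i hi => ?_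
  rcases hf i hi with h | h | h <;> rw [h]
  · rw [abs_of_nonneg ha]; ring
  · rw [abs_of_nonneg (by linarith)]; ring
  · rw [abs_of_nonpos had]; field_simp; ring

section PartialTranspose

variable {B : Type*}

theorem ptA_add (X Y : Matrix (Fin 2 × B) (Fin 2 × B) ℂ) : ptA (X + Y) = ptA X + ptA Y := rfl

theorem ptA_smul (r : ℝ) (X : Matrix (Fin 2 × B) (Fin 2 × B) ℂ) : ptA (r • X) = r • ptA X := rfl

theorem ptA_one [DecidableEq B] : ptA (1 : Matrix (Fin 2 × B) (Fin 2 × B) ℂ) = 1 := by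
  ext p q
  simp only [ptA, one_apply, Prod.ext_iff]
  exact if_congr ⟨fun h => ⟨h.1.symm, h.2⟩, fun h => ⟨h.1.symm, h.2⟩⟩ rfl rfl

end PartialTranspose

section Discord

variable {B : Type*} [Fintype B] [DecidableEq B]

theorem frobSq_eq_sum_normSq {m : Type*} [Fintype m] (X : Matrix m m ℂ) :
    frobSq X = ∑ i, ∑ j, Complex.normSq (X j i) := by
  simp only [frobSq, trace, diag, mul_apply, conjTranspose_apply, Complex.re_sum,
    Complex.star_def, Complex.normSq_apply, Complex.mul_re, Complex.conj_re, Complex.conj_im]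
  ring_nf

theorem frobSq_nonneg {m : Type*} [Fintype m] (X : Matrix m m ℂ) : 0 ≤ frobSq X := by
  rw [frobSq_eq_sum_normSq]
  exact Finset.sum_nonneg fun _ _ => Finset.sum_nonneg fun _ _ => Complex.normSq_nonneg _

theorem geomDiscord_le (ρ : Matrix (Fin 2 × B) (Fin 2 × B) ℂ) {P : Matrix (Fin 2) (Fin 2) ℂ}
    (hPP : P * P = P) (hPH : Pᴴ = P) (hPtr : P.trace = 1) :
    geomDiscord ρ ≤ 2 * frobSq (ρ - measured P ρ) := by
  unfold geomDiscord
  gcongr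
  exact csInf_le ⟨0, by rintro _ ⟨Q, -, -, -, rfl⟩; exact frobSq_nonneg _⟩ ⟨P, hPP, hPH, hPtr, rfl⟩

theorem geomDiscord_le_diagonal_single (ρ : Matrix (Fin 2 × B) (Fin 2 × B) ℂ) :
    geomDiscord ρ ≤ 2 * frobSq (ρ - measured (diagonal (Pi.single 0 1)) ρ) :=
  geomDiscord_le ρ (by rw [diagonal_mul_diagonal]; congr 1; ext i; fin_cases i <;> simp)
    (by simp) (by simp)

theorem sub_measured_diagonal_single_apply (ρ : Matrix (Fin 2 × B) (Fin 2 × B) ℂ)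
    (p q : Fin 2 × B) :
    (ρ - measured (diagonal (Pi.single 0 1)) ρ) p q = if p.1 = q.1 then 0 else ρ p q := by
  have hkron (d : Fin 2 → ℂ) : diagonal d ⊗ₖ (1 : Matrix B B ℂ) = diagonal fun p => d p.1 := by
    rw [← diagonal_one, diagonal_kronecker_diagonal]
    simp
  rw [measured, ← diagonal_one (n := Fin 2), diagonal_sub, hkron, hkron]
  simp only [Matrix.sub_apply, Matrix.add_apply, mul_diagonal, diagonal_mul]
  obtain ⟨p1, p2⟩ := p
  obtain ⟨q1, q2⟩ := q
  fin_cases p1 <;> fin_cases q1 <;> simp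

end Discord

abbrev Index2x8 : Type := Fin 2 × (Fin 2 × Fin 4)

/-- `flipOp` in the indexing of `wernerAs2x8`, with integer entries so that identities about it
can be decided. -/
def flip2x8 : Matrix Index2x8 Index2x8 ℤ :=
  fun p q => if pair p.1 p.2.1 = q.2.2 ∧ p.2.2 = pair q.1 q.2.1 then 1 else 0

def flip2x8PT : Matrix Index2x8 Index2x8 ℤ := fun p q => flip2x8 (q.1, p.2) (p.1, q.2)

theorem flip2x8PT_cube :
    ((Int.castRingHom ℂ).mapMatrix flip2x8PT) ^ 3 =
      4 • (Int.castRingHom ℂ).mapMatrix flip2x8PT := by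
  have h : ∀ p q, (flip2x8PT * flip2x8PT * flip2x8PT) p q = (4 • flip2x8PT) p q := by decide
  rw [← map_pow, ← map_nsmul, pow_three, ← Matrix.mul_assoc, Matrix.ext h]

theorem trace_flip2x8PT : ((Int.castRingHom ℂ).mapMatrix flip2x8PT).trace = 4 := by
  have h : flip2x8PT.trace = 4 := by decide
  rw [RingHom.mapMatrix_apply, ← AddMonoidHom.map_trace, h]
  simp

theorem trace_sq_flip2x8PT : (((Int.castRingHom ℂ).mapMatrix flip2x8PT) ^ 2).trace = 16 := by
  have h : (flip2x8PT ^ 2).trace = 16 := by decide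
  rw [← map_pow, RingHom.mapMatrix_apply, ← AddMonoidHom.map_trace, h]
  simp

theorem pair_inj {a b c d : Fin 2} : pair a b = pair c d ↔ a = c ∧ b = d := by
  simp only [pair, Fin.ext_iff]
  omega

theorem wernerAs2x8_eq (z : ℝ) :
    wernerAs2x8 z = ((4 - z) / 60 : ℝ) • 1 + ((4 * z - 1) / 60 : ℝ) •
      (Int.castRingHom ℂ).mapMatrix flip2x8 := by
  ext p q
  simp only [wernerAs2x8, werner4, flipOp, flip2x8, Matrix.add_apply, Matrix.smul_apply,
    one_apply, RingHom.mapMatrix_apply, map_apply, Prod.ext_iff, pair_inj, and_assoc,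
    Complex.real_smul, smul_eq_mul]
  split_ifs <;> simp only [map_one, map_zero] <;> push_cast <;> ring

theorem ptA_wernerAs2x8 (z : ℝ) :
    ptA (wernerAs2x8 z) = algebraMap ℝ _ ((4 - z) / 60) + ((4 * z - 1) / 60 : ℝ) •
      (Int.castRingHom ℂ).mapMatrix flip2x8PT := by
  rw [wernerAs2x8_eq, ptA_add, ptA_smul, ptA_smul, ptA_one, Algebra.algebraMap_eq_smul_one]
  rfl

theorem trace_ptA_wernerAs2x8 (z : ℝ) : (ptA (wernerAs2x8 z)).trace = 1 := by
  rw [ptA_wernerAs2x8, Algebra.algebraMap_eq_smul_one, trace_add, trace_smul, trace_smul,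
    trace_one, trace_flip2x8PT]
  simp only [Complex.real_smul, Fintype.card_prod, Fintype.card_fin]
  push_cast
  ring

theorem sum_abs_eigenvalues_ptA_wernerAs2x8 {z : ℝ} (hz : z ≤ -2 / 7)
    (hH : (ptA (wernerAs2x8 z)).IsHermitian) :
    ∑ i, |hH.eigenvalues i| = (8 - 7 * z) / 10 := by
  set a : ℝ := (4 - z) / 60
  set b : ℝ := (4 * z - 1) / 60
  set G := (Int.castRingHom ℂ).mapMatrix flip2x8PT
  have hb : b < 0 := by simp only [b]; linarith
  have hshift : ptA (wernerAs2x8 z) - algebraMap ℝ _ a = b • G := by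
    rw [ptA_wernerAs2x8, add_sub_cancel_left]
  have hcube : (ptA (wernerAs2x8 z) - algebraMap ℝ _ a) ^ 3 =
      (-2 * b) ^ 2 • (ptA (wernerAs2x8 z) - algebraMap ℝ _ a) := by
    rw [hshift, _root_.smul_pow, flip2x8PT_cube, ← Nat.cast_smul_eq_nsmul ℝ, smul_smul,
      smul_smul]
    congr 1
    ring
  have htrace : ∑ i, hH.eigenvalues i = 1 := by
    have h := trace_ptA_wernerAs2x8 z
    rwa [hH.trace_eq_sum_eigenvalues, ← RCLike.ofReal_sum, ← RCLike.ofReal_one,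
      RCLike.ofReal_inj] at h
  have htrace2 :
      ∑ i, (hH.eigenvalues i - a) * (hH.eigenvalues i - (a + -2 * b)) = 24 * b ^ 2 := by
    have h := hH.trace_aeval ((X - C a) * (X - C (a + -2 * b)))
    rw [map_mul, map_sub, map_sub, aeval_X, aeval_C, aeval_C, map_add, ← sub_sub, hshift,
      Algebra.algebraMap_eq_smul_one, ← RCLike.ofReal_sum] at h
    simp only [eval_mul, eval_sub, eval_X, eval_C] at h
    rw [← RCLike.ofReal_inj (K := ℂ), ← h, mul_sub, smul_mul_smul_comm, mul_smul_comm,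
      Matrix.mul_one, ← sq G, trace_sub, trace_smul, trace_smul, trace_smul, trace_sq_flip2x8PT,
      trace_flip2x8PT]
    simp only [Complex.real_smul, RCLike.ofReal_eq_complex_ofReal]
    push_cast
    ring
  rw [Finset.sum_abs_eq_of_forall_mem _ _ (by linarith) (by simp only [a]; linarith)
    (by simp only [a, b]; linarith) (fun i _ => hH.eigenvalues_eq_or_of_cube hcube i), htrace,
    htrace2]
  field_simp [hb.ne]
  simp only [a, b]
  ring

theorem frobSq_wernerAs2x8_sub_measured (z : ℝ) :
    frobSq (wernerAs2x8 z - measured (diagonal (Pi.single 0 1)) (wernerAs2x8 z)) =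
      8 * ((4 * z - 1) / 60) ^ 2 := by
  have hcount :
      ∑ i : Index2x8, ∑ j : Index2x8, (if j.1 = i.1 then 0 else flip2x8 j i ^ 2) = 8 := by
    decide
  have hentry : ∀ i j : Index2x8, Complex.normSq (if j.1 = i.1 then 0 else wernerAs2x8 z j i) =
      ((4 * z - 1) / 60) ^ 2 * ((if j.1 = i.1 then 0 else flip2x8 j i ^ 2 : ℤ) : ℝ) := by
    intro i j
    split_ifs with h
    · simp
    · have hji : j ≠ i := fun e => h (congrArg Prod.fst e)
      simp only [wernerAs2x8_eq, Matrix.add_apply, Matrix.smul_apply, one_apply_ne hji,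
        smul_zero, zero_add, RingHom.mapMatrix_apply, map_apply, eq_intCast, Complex.real_smul]
      rw [Complex.normSq_mul, Complex.normSq_ofReal, ← Complex.ofReal_intCast,
        Complex.normSq_ofReal]
      push_cast
      ring
  simp_rw [frobSq_eq_sum_normSq, sub_measured_diagonal_single_apply, hentry, ← Finset.mul_sum,
    ← Int.cast_sum, hcount]
  push_cast
  ring

/-- For `z ∈ [−1, −8/13)`, the `4 ⊗ 4` Werner state viewed as a `2 ⊗ 8` state
violates the conjectured inequality `D ≥ N²`. -/
theorem werner_2x8_discord_lt_sq_negativity (z : ℝ)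
    (hz : z ∈ Set.Ico (-1 : ℝ) (-8/13))
    (hH : (ptA (wernerAs2x8 z)).IsHermitian) :
    geomDiscord (wernerAs2x8 z) < ((∑ i, |hH.eigenvalues i|) - 1) ^ 2 := by
  obtain ⟨-, hz⟩ := hz
  rw [sum_abs_eigenvalues_ptA_wernerAs2x8 (by linarith)]
  calc geomDiscord (wernerAs2x8 z) ≤ 2 * (8 * ((4 * z - 1) / 60) ^ 2) := by
        rw [← frobSq_wernerAs2x8_sub_measured]
        exact geomDiscord_le_diagonal_single _
    _ < ((8 - 7 * z) / 10 - 1) ^ 2 := by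
        nlinarith [mul_pos (show (0 : ℝ) < -(8 + 13 * z) by linarith)
          (show (0 : ℝ) < -(4 + 29 * z) by linarith)]
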